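/- arXiv:2212.12255 — 5 statements merged into one kernel-verified Lean document; each statement's English description precedes it below -/
import Mathlib

section
/- For all real a, b > 0 one has tanh(a + b) < tanh(a) + tanh(b). Consequently, for any h > 0 and any nonzero integers j₁, j₂, j₃ with j₁ + j₂ + j₃ = 0, one has tanh(h j₁) + tanh(h j₂) + tanh(h j₃) ≠ 0. -/
/-! The addition formula `tanh (a + b) = (tanh a + tanh b) / (1 + tanh a * tanh b)` shows
that `tanh` is strictly subadditive on positive reals, and by oddness strictly superadditive on
negative reals. Of three nonzero reals summing to zero, two, say `x` and `y`, have the same sign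
and the third is `-(x + y)`; so the sum of the three `tanh`s is
`tanh x + tanh y - tanh (x + y) ≠ 0`. -/

namespace Real

theorem tanh_pos {x : ℝ} (hx : 0 < x) : 0 < tanh x := by
  rw [tanh_eq_sinh_div_cosh]
  exact div_pos (sinh_pos_iff.2 hx) (cosh_pos x)

theorem tanh_add (x y : ℝ) : tanh (x + y) = (tanh x + tanh y) / (1 + tanh x * tanh y) := by
  have hx := (cosh_pos x).ne'
  have hy := (cosh_pos y).ne'
  have hxy : cosh x * cosh y + sinh x * sinh y ≠ 0 := by
    rw [← cosh_add]; exact (cosh_pos _).ne'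
  simp only [tanh_eq_sinh_div_cosh, sinh_add, cosh_add]
  field_simp

theorem tanh_add_lt_add {a b : ℝ} (ha : 0 < a) (hb : 0 < b) :
    tanh (a + b) < tanh a + tanh b := by
  rw [tanh_add]
  exact div_lt_self (add_pos (tanh_pos ha) (tanh_pos hb))
    (lt_add_of_pos_right 1 (mul_pos (tanh_pos ha) (tanh_pos hb)))

theorem add_lt_tanh_add {a b : ℝ} (ha : a < 0) (hb : b < 0) :
    tanh a + tanh b < tanh (a + b) := by
  have := tanh_add_lt_add (neg_pos.2 ha) (neg_pos.2 hb)
  rw [← neg_add, tanh_neg, tanh_neg, tanh_neg] at this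
  linarith

theorem tanh_add_ne_add_of_mul_pos {x y : ℝ} (hxy : 0 < x * y) :
    tanh (x + y) ≠ tanh x + tanh y := by
  rcases pos_and_pos_or_neg_and_neg_of_mul_pos hxy with ⟨hx, hy⟩ | ⟨hx, hy⟩
  · exact (tanh_add_lt_add hx hy).ne
  · exact (add_lt_tanh_add hx hy).ne'

theorem tanh_add_add_tanh_ne_zero_of_mul_pos {x y z : ℝ} (hxy : 0 < x * y)
    (hsum : x + y + z = 0) : tanh x + tanh y + tanh z ≠ 0 := by
  rw [eq_neg_of_add_eq_zero_right hsum, tanh_neg, ← sub_eq_add_neg, sub_ne_zero]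
  exact (tanh_add_ne_add_of_mul_pos hxy).symm

theorem tanh_add_add_tanh_ne_zero {x y z : ℝ} (hx : x ≠ 0) (hy : y ≠ 0) (hz : z ≠ 0)
    (hsum : x + y + z = 0) : tanh x + tanh y + tanh z ≠ 0 := by
  -- `(x y) (y z) (z x) = (x y z) ^ 2 > 0`, so one of the three products is positive.
  have hsame : 0 < x * y ∨ 0 < y * z ∨ 0 < z * x := by
    by_contra! h
    have hprod : 0 < (x * y) * (y * z) * (z * x) := by
      rw [show (x * y) * (y * z) * (z * x) = (x * y * z) ^ 2 by ring]
      positivity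
    exact hprod.not_ge
      (mul_nonpos_of_nonneg_of_nonpos (mul_nonneg_of_nonpos_of_nonpos h.1 h.2.1) h.2.2)
  rcases hsame with h | h | h
  · exact tanh_add_add_tanh_ne_zero_of_mul_pos h hsum
  · exact fun h0 => tanh_add_add_tanh_ne_zero_of_mul_pos (z := x) h (by linarith) (by linarith)
  · exact fun h0 => tanh_add_add_tanh_ne_zero_of_mul_pos (z := y) h (by linarith) (by linarith)

end Real

/-- Strict subadditivity of `tanh` on positive reals and the finite-depth
six-wave vorticity non-resonance. -/
theorem tanh_strict_subadditive_and_nonresonance :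
    (∀ a b : ℝ, 0 < a → 0 < b → Real.tanh (a + b) < Real.tanh a + Real.tanh b) ∧
    ∀ h : ℝ, 0 < h → ∀ j₁ j₂ j₃ : ℤ, j₁ ≠ 0 → j₂ ≠ 0 → j₃ ≠ 0 → j₁ + j₂ + j₃ = 0 →
      Real.tanh (h * j₁) + Real.tanh (h * j₂) + Real.tanh (h * j₃) ≠ 0 := by
  refine ⟨fun a b ha hb => Real.tanh_add_lt_add ha hb, ?_⟩
  intro h hh j₁ j₂ j₃ h₁ h₂ h₃ hsum
  have hsum' : (j₁ : ℝ) + j₂ + j₃ = 0 := by exact_mod_cast hsum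
  have hne (j : ℤ) (hj : j ≠ 0) : h * (j : ℝ) ≠ 0 := mul_ne_zero hh.ne' (Int.cast_ne_zero.2 hj)
  exact Real.tanh_add_add_tanh_ne_zero (hne j₁ h₁) (hne j₂ h₂) (hne j₃ h₃)
    (by linear_combination h * hsum')
end

section
/- Let g > 0, γ ∈ ℝ, h > 0. Then for every real y ≥ 1, the derivative of the function f(y) = y³ / (g·y + (γ²/4)·tanh(h·y)) satisfies f′(y) ≥ 16·g / (16·g² + γ⁴) > 0. -/
/-!
Write `c = γ²/4` and `D(y) = g y + c tanh (h y)`. The numerator of `(y³ / D)'` is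
`y² (2 g y + c (3 tanh (h y) - h y sech² (h y)))`, and `x sech² x ≤ tanh x` for `x ≥ 0` (it is
`x ≤ sinh x cosh x`), so the numerator is at least `2 g y³`. Since `0 ≤ tanh ≤ 1` we have
`0 < D ≤ g y + c`, and `(g y + c)² ≤ 2 (g² + c²) y³` for `y ≥ 1` gives
`(y³ / D)' ≥ 2 g y³ / (g y + c)² ≥ g / (g² + c²) = 16 g / (16 g² + γ⁴)`.
-/

open Real

namespace Real

theorem hasDerivAt_tanh (x : ℝ) : HasDerivAt tanh (1 / cosh x ^ 2) x := by
  rw [show tanh = fun x => sinh x / cosh x from funext tanh_eq_sinh_div_cosh]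
  refine ((hasDerivAt_sinh x).div (hasDerivAt_cosh x) (cosh_pos x).ne').congr_deriv ?_
  rw [← cosh_sq_sub_sinh_sq x]
  ring

theorem tanh_nonneg {x : ℝ} (hx : 0 ≤ x) : 0 ≤ tanh x := by
  rw [tanh_eq_sinh_div_cosh]
  exact div_nonneg (sinh_nonneg_iff.2 hx) (cosh_pos x).le

theorem div_cosh_sq_le_tanh {x : ℝ} (hx : 0 ≤ x) : x / cosh x ^ 2 ≤ tanh x := by
  have hx_le : x ≤ sinh x * cosh x := by
    nlinarith [self_le_sinh_iff.2 hx, one_le_cosh x, sinh_nonneg_iff.2 hx]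
  calc x / cosh x ^ 2 ≤ sinh x * cosh x / cosh x ^ 2 := by gcongr
    _ = tanh x := by
      rw [tanh_eq_sinh_div_cosh]
      field_simp [(cosh_pos x).ne']

end Real

theorem hasDerivAt_linear_add_tanh (g c h y : ℝ) :
    HasDerivAt (fun y => g * y + c * tanh (h * y)) (g + c * h / cosh (h * y) ^ 2) y := by
  have h_tanh := (hasDerivAt_tanh (h * y)).comp y ((hasDerivAt_id y).const_mul h)
  refine (((hasDerivAt_id y).const_mul g).add (h_tanh.const_mul c)).congr_deriv ?_
  ring

theorem hasDerivAt_cube_div_linear_add_tanh {g c h y : ℝ} (hD : g * y + c * tanh (h * y) ≠ 0) :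
    HasDerivAt (fun y => y ^ 3 / (g * y + c * tanh (h * y)))
      (y ^ 2 * (2 * g * y + c * (3 * tanh (h * y) - h * y / cosh (h * y) ^ 2)) /
        (g * y + c * tanh (h * y)) ^ 2) y := by
  refine ((hasDerivAt_pow 3 y).div (hasDerivAt_linear_add_tanh g c h y) hD).congr_deriv ?_
  push_cast
  ring

theorem div_le_two_mul_cube_div_sq {g c y : ℝ} (hg : 0 < g) (hc : 0 ≤ c) (hy : 1 ≤ y) :
    g / (g ^ 2 + c ^ 2) ≤ 2 * g * y ^ 3 / (g * y + c) ^ 2 := by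
  have hy0 : 0 < y := by linarith
  have hy_cube : y ^ 2 ≤ y ^ 3 := pow_le_pow_right₀ hy (by norm_num)
  have hone_le : 1 ≤ y ^ 3 := one_le_pow₀ hy
  rw [div_le_div_iff₀ (by positivity) (by positivity)]
  nlinarith [sq_nonneg (g * y - c), mul_le_mul_of_nonneg_left hy_cube (sq_nonneg g),
    mul_le_mul_of_nonneg_left hone_le (sq_nonneg c)]

/-- Uniform lower bound on the derivative of `y ↦ y³ / (g y + (γ²/4) tanh (h y))`
for `y ≥ 1`. -/
theorem deriv_lower_bound (g γ h : ℝ) (hg : 0 < g) (hh : 0 < h) :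
    0 < 16 * g / (16 * g ^ 2 + γ ^ 4) ∧
    ∀ y : ℝ, 1 ≤ y →
      16 * g / (16 * g ^ 2 + γ ^ 4) ≤
        deriv (fun y : ℝ => y ^ 3 / (g * y + γ ^ 2 / 4 * Real.tanh (h * y))) y := by
  refine ⟨by positivity, fun y hy => ?_⟩
  set c := γ ^ 2 / 4 with hc_def
  have hc : 0 ≤ c := by positivity
  have hhy : 0 ≤ h * y := by nlinarith
  have hT := tanh_nonneg hhy
  have hD : 0 < g * y + c * tanh (h * y) := by nlinarith
  rw [(hasDerivAt_cube_div_linear_add_tanh hD.ne').deriv]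
  calc 16 * g / (16 * g ^ 2 + γ ^ 4) = g / (g ^ 2 + c ^ 2) := by
        rw [hc_def]; field_simp; ring
    _ ≤ 2 * g * y ^ 3 / (g * y + c) ^ 2 := div_le_two_mul_cube_div_sq hg hc hy
    _ ≤ 2 * g * y ^ 3 / (g * y + c * tanh (h * y)) ^ 2 := by
        gcongr
        nlinarith [tanh_lt_one (h * y)]
    _ ≤ _ := by
        gcongr ?_ / _
        have hcy : 0 ≤ y ^ 2 * c := by positivity
        nlinarith [mul_nonneg hcy hT, mul_nonneg hcy (sub_nonneg.2 (div_cosh_sq_le_tanh hhy))]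
end

section
/- Let f ∈ ℝ with 1 + 2f > 0, and set λ = √(1 + 2f), D = (1 + f + λ)² − f², h = (1 + f + λ)/√D, g = −f/√D. Then D = (1 + 2f + λ)(1 + λ) > 0 and the following identities hold: (i) h² − g² = 1; (ii) (h² + g²)·(1 + f) + 2·h·g·f = λ; (iii) 2·h·g·(1 + f) + (h² + g²)·f = 0. -/
/-! Write `h = c * (1 + f + λ)` and `g = c * (-f)` with `c = D^{-1/2}`, so that `c² D = 1`.
Each identity is homogeneous of degree two in `(h, g)`, hence reduces to a polynomial identity
in `f` and `λ`, which holds modulo `λ² = 1 + 2 f`. -/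

section

variable {f lam : ℝ}

theorem diagonal_numerator_eq (hlam : lam ^ 2 = 1 + 2 * f) :
    ((1 + f + lam) ^ 2 + f ^ 2) * (1 + f) - 2 * (1 + f + lam) * f * f =
      lam * ((1 + f + lam) ^ 2 - f ^ 2) := by
  linear_combination (-(1 + f + lam)) * hlam

theorem offDiagonal_numerator_eq (hlam : lam ^ 2 = 1 + 2 * f) :
    ((1 + f + lam) ^ 2 + f ^ 2) * f - 2 * (1 + f + lam) * f * (1 + f) = 0 := by
  linear_combination f * hlam

end

/-- Algebraic identities expressing that the matrix `F = [[h,g],[g,h]]` is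
symplectic and diagonalizes the highest-order matrix symbol. -/
theorem diagonalization_identities (f : ℝ) (hf : 0 < 1 + 2 * f)
    (lam D h g : ℝ)
    (hlam : lam = Real.sqrt (1 + 2 * f))
    (hD : D = (1 + f + lam) ^ 2 - f ^ 2)
    (hh : h = (1 + f + lam) / Real.sqrt D)
    (hg : g = -f / Real.sqrt D) :
    D = (1 + 2 * f + lam) * (1 + lam) ∧ 0 < D ∧
    h ^ 2 - g ^ 2 = 1 ∧
    (h ^ 2 + g ^ 2) * (1 + f) + 2 * h * g * f = lam ∧
    2 * h * g * (1 + f) + (h ^ 2 + g ^ 2) * f = 0 := by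
  have hlam_sq : lam ^ 2 = 1 + 2 * f := hlam ▸ Real.sq_sqrt hf.le
  have hlam_pos : 0 < lam := hlam ▸ Real.sqrt_pos.mpr hf
  have hD_factor : D = (1 + 2 * f + lam) * (1 + lam) := by rw [hD]; ring
  have hD_pos : 0 < D := hD_factor ▸ mul_pos (by linarith) (by linarith)
  set c := (Real.sqrt D)⁻¹
  have hc : c ^ 2 * D = 1 := by
    rw [inv_pow, Real.sq_sqrt hD_pos.le, inv_mul_cancel₀ hD_pos.ne']
  rw [hh, div_eq_inv_mul, hg, div_eq_inv_mul]
  refine ⟨hD_factor, hD_pos, ?_, ?_, ?_⟩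
  · linear_combination hc - c ^ 2 * hD
  · linear_combination c ^ 2 * diagonal_numerator_eq hlam_sq - c ^ 2 * lam * hD + lam * hc
  · linear_combination c ^ 2 * offDiagonal_numerator_eq hlam_sq
end

section
/- Let q ≥ 2, let n₁, …, n_q be natural numbers and σ₁, …, σ_q ∈ {−1, +1}, and let N = max_a n_a and N₂ be the second largest among n₁,…,n_q (counted with multiplicity). If 2·|Σ_{a=1}^q σ_a n_a| ≤ N, then N ≤ 2(q−1)·N₂. -/
/-! Isolating the term `a₀`, `n a₀ = |σ a₀ n a₀| ≤ |∑ σ a n a| + ∑_{a ≠ a₀} n a`, and the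
last sum has `q - 1` terms, each at most `N₂`. With `|∑ σ a n a| ≤ n a₀ / 2` this gives
`n a₀ / 2 ≤ (q - 1) N₂`. -/

open Finset

theorem abs_le_abs_sum_add_sum_abs_erase {ι α : Type*} [AddCommGroup α] [LinearOrder α]
    [IsOrderedAddMonoid α] [DecidableEq ι] {s : Finset ι} {i : ι} (hi : i ∈ s) (f : ι → α) :
    |f i| ≤ |∑ j ∈ s, f j| + ∑ j ∈ s.erase i, |f j| := by
  calc |f i| = |∑ j ∈ s, f j - ∑ j ∈ s.erase i, f j| := by
        rw [← add_sum_erase s f hi, add_sub_cancel_right]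
    _ ≤ |∑ j ∈ s, f j| + |∑ j ∈ s.erase i, f j| := abs_sub _ _
    _ ≤ |∑ j ∈ s, f j| + ∑ j ∈ s.erase i, |f j| := by gcongr; exact abs_sum_le_sum_abs _ _

theorem sum_erase_le_card_mul_sup_erase {ι : Type*} [DecidableEq ι] (s : Finset ι) (i : ι)
    (n : ι → ℕ) : ∑ j ∈ s.erase i, n j ≤ #(s.erase i) * (s.erase i).sup n := by
  simpa using sum_le_card_nsmul _ _ _ fun j hj => le_sup (f := n) hj

theorem max_le_of_signed_sum_small_general (q : ℕ) (n : Fin q → ℕ)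
    (σ : Fin q → ℤ) (hσ : ∀ a, σ a = 1 ∨ σ a = -1)
    (a₀ : Fin q)
    (N₂ : ℕ) (hN₂ : N₂ = (Finset.univ.erase a₀).sup n)
    (hsmall : 2 * (∑ a, σ a * (n a : ℤ)).natAbs ≤ n a₀) :
    n a₀ ≤ 2 * (q - 1) * N₂ := by
  have habs : ∀ a, |σ a * (n a : ℤ)| = n a := fun a => by
    rcases hσ a with h | h <;> simp [h]
  have hisolate : n a₀ ≤ (∑ a, σ a * (n a : ℤ)).natAbs + ∑ a ∈ univ.erase a₀, n a := by
    have h := abs_le_abs_sum_add_sum_abs_erase (mem_univ a₀) fun a => σ a * (n a : ℤ)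
    simp only [habs, Int.abs_eq_natAbs] at h
    exact_mod_cast h
  have htail := sum_erase_le_card_mul_sup_erase univ a₀ n
  rw [card_erase_of_mem (mem_univ a₀), card_univ, Fintype.card_fin, ← hN₂] at htail
  rw [mul_assoc]
  omega

/-- Near-cancellation in a signed sum forces the largest frequency to be
comparable to the second largest. -/
theorem max_le_of_signed_sum_small (q : ℕ) (hq : 2 ≤ q) (n : Fin q → ℕ)
    (σ : Fin q → ℤ) (hσ : ∀ a, σ a = 1 ∨ σ a = -1)
    (a₀ : Fin q) (ha₀ : ∀ a, n a ≤ n a₀)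
    (N₂ : ℕ) (hN₂ : N₂ = (Finset.univ.erase a₀).sup n)
    (hsmall : 2 * (∑ a, σ a * (n a : ℤ)).natAbs ≤ n a₀) :
    n a₀ ≤ 2 * (q - 1) * N₂ :=
  max_le_of_signed_sum_small_general q n σ hσ a₀ N₂ hN₂ hsmall
end

section
/- Let α, β : ℤ∖{0} → ℕ be finitely supported with |α| = |β| = 2 (where |α| = Σ_j α_j). Assume (i) the super-action preserving condition α_n + α_{−n} = β_n + β_{−n} for every n ∈ ℕ, and (ii) the zero-momentum condition Σ_{j∈ℤ∖{0}} j·(α_j − β_j) = 0. Then α = β. -/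
/-!
Since `|α| = |β| = 2`, we have `α = e_a + e_b` and `β = e_c + e_d`. The super-action condition,
together with `α 0 = β 0`, says that the push-forwards of `α` and `β` along `Int.natAbs` agree,
i.e. `{|a|, |b|} = {|c|, |d|}` as unordered pairs, and zero momentum says `a + b = c + d`. After
matching `|a| = |c|` and `|b| = |d|`, either `a = c` (hence `b = d`), or `a = -c ≠ c`, in which
case the momentum forces `b = c` and `d = -c`; either way `{a, b} = {c, d}`.
-/

open Finsupp

namespace Finsupp

theorem exists_eq_single_add_single_of_sum_eq_two {ι : Type*} (α : ι →₀ ℕ)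
    (h : (α.sum fun _ k => k) = 2) : ∃ a b : ι, α = single a 1 + single b 1 := by
  classical
  obtain ⟨a, b, hab⟩ := Multiset.card_eq_two.mp ((card_toMultiset α).trans h)
  refine ⟨a, b, ?_⟩
  rw [← toMultiset_toFinsupp α, hab, Multiset.insert_eq_cons, ← Multiset.singleton_add,
    Multiset.toFinsupp_add, Multiset.toFinsupp_singleton, Multiset.toFinsupp_singleton]

variable {M : Type*} [AddCommMonoid M]

theorem mapDomain_natAbs_apply_zero (f : ℤ →₀ M) : f.mapDomain Int.natAbs 0 = f 0 := by
  induction f using Finsupp.induction_linear with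
  | zero => simp
  | add f g hf hg => simp [mapDomain_add, hf, hg]
  | single x m => simp [mapDomain_single, single_apply]

theorem mapDomain_natAbs_apply_of_pos (f : ℤ →₀ M) {n : ℕ} (hn : 0 < n) :
    f.mapDomain Int.natAbs n = f n + f (-n) := by
  induction f using Finsupp.induction_linear with
  | zero => simp
  | add f g hf hg => simp only [mapDomain_add, add_apply, hf, hg]; abel
  | single x m =>
    simp only [mapDomain_single, single_apply]
    split_ifs <;> first | omega | simp

theorem mapDomain_natAbs_eq_of_apply_add_apply_neg {f g : ℤ →₀ M} (h0 : f 0 = g 0)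
    (h : ∀ n : ℕ, 0 < n → f n + f (-n) = g n + g (-n)) :
    f.mapDomain Int.natAbs = g.mapDomain Int.natAbs := by
  ext n
  rcases n.eq_zero_or_pos with rfl | hn
  · rw [mapDomain_natAbs_apply_zero, mapDomain_natAbs_apply_zero, h0]
  · rw [mapDomain_natAbs_apply_of_pos f hn, mapDomain_natAbs_apply_of_pos g hn, h n hn]

theorem sum_union_mul_sub_eq (α β : ℤ →₀ ℕ) :
    ∑ j ∈ α.support ∪ β.support, j * ((α j : ℤ) - β j) =
      (α.sum fun j k => j * k) - β.sum fun j k => j * k := by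
  simp only [mul_sub, Finset.sum_sub_distrib]
  rw [sum_of_support_subset α Finset.subset_union_left _ (by simp),
    sum_of_support_subset β Finset.subset_union_right _ (by simp)]

theorem sum_mul_single_add_single (a b : ℤ) :
    ((single a 1 + single b 1 : ℤ →₀ ℕ).sum fun j k => j * k) = a + b := by
  rw [sum_add_index' (by simp) (by intros; push_cast; ring), sum_single_index (by simp),
    sum_single_index (by simp)]
  simp

theorem single_add_single_eq_of_mapDomain_natAbs_eq_of_add_eq {a b c d : ℤ}
    (habs : (single a 1 + single b 1 : ℤ →₀ ℕ).mapDomain Int.natAbs =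
      (single c 1 + single d 1 : ℤ →₀ ℕ).mapDomain Int.natAbs)
    (hsum : a + b = c + d) : (single a 1 + single b 1 : ℤ →₀ ℕ) = single c 1 + single d 1 := by
  simp only [mapDomain_add, mapDomain_single] at habs
  rw [single_add_single_eq_single_add_single one_ne_zero one_ne_zero] at habs ⊢
  omega

end Finsupp

/-- A super-action preserving, zero-momentum multi-index of length `|α|=|β|=2`
is integrable: `α = β`. -/
theorem quartic_sap_momentum_integrable (α β : ℤ →₀ ℕ)
    (hα0 : α 0 = 0) (hβ0 : β 0 = 0)
    (hα2 : (α.sum fun _ k => k) = 2) (hβ2 : (β.sum fun _ k => k) = 2)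
    (hSAP : ∀ n : ℕ, 0 < n → α (n : ℤ) + α (-(n : ℤ)) = β (n : ℤ) + β (-(n : ℤ)))
    (hmom : ∑ j ∈ α.support ∪ β.support, (j : ℤ) * ((α j : ℤ) - (β j : ℤ)) = 0) :
    α = β := by
  have habs := mapDomain_natAbs_eq_of_apply_add_apply_neg (hα0.trans hβ0.symm) hSAP
  obtain ⟨a, b, rfl⟩ := exists_eq_single_add_single_of_sum_eq_two α hα2
  obtain ⟨c, d, rfl⟩ := exists_eq_single_add_single_of_sum_eq_two β hβ2
  rw [sum_union_mul_sub_eq, sum_mul_single_add_single, sum_mul_single_add_single,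
    sub_eq_zero] at hmom
  exact single_add_single_eq_of_mapDomain_natAbs_eq_of_add_eq habs hmom
end
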